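/- arXiv:2111.02944 — 4 statements merged into one kernel-verified Lean document; each statement's English description precedes it below -/
import Mathlib

section
/- Let (X,d,m) be a metric measure space satisfying CD(0,∞) with positive volume entropy h := h(X,d,m) > 0. Then the constant h in the isoperimetric inequality m⁺(Ω) ≥ h·m(Ω) is sharp: for every C > h there exists a Borel set Ω ⊆ X with 0 < m(Ω) < ∞ such that m⁺(Ω) < C·m(Ω). -/
open MeasureTheory Metric Filter Set

/-- L²-Wasserstein distance between two measures, via couplings. -/
noncomputable def wassersteinDist {X : Type*} [MeasurableSpace X] [PseudoEMetricSpace X]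
    (μ ν : Measure X) : ENNReal :=
  (⨅ π : {π : Measure (X × X) // π.map Prod.fst = μ ∧ π.map Prod.snd = ν},
      ∫⁻ p, edist p.1 p.2 ^ 2 ∂(π : Measure (X × X))) ^ (1/2 : ℝ)

open Classical in
/-- Relative entropy `Ent_m(μ) = ∫ ρ log ρ dm` for `μ = ρ m`; `⊤` otherwise. -/
noncomputable def relEntropy {X : Type*} [MeasurableSpace X] (m μ : Measure X) : EReal :=
  if μ ≪ m ∧ Integrable (fun x => (μ.rnDeriv m x).toReal * Real.log (μ.rnDeriv m x).toReal) m
  then ((∫ x, (μ.rnDeriv m x).toReal * Real.log (μ.rnDeriv m x).toReal ∂m : ℝ) : EReal)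
  else ⊤

/-- CD(0,∞): displacement convexity of relative entropy along some W₂-geodesic. -/
def IsCD0Infty {X : Type*} [MeasurableSpace X] [PseudoEMetricSpace X] (m : Measure X) : Prop :=
  ∀ μ₀ μ₁ : Measure X, IsProbabilityMeasure μ₀ → IsProbabilityMeasure μ₁ →
    μ₀ ≪ m → μ₁ ≪ m →
    (∀ x₀ : X, ∫⁻ x, edist x x₀ ^ 2 ∂μ₀ ≠ ⊤) →
    (∀ x₀ : X, ∫⁻ x, edist x x₀ ^ 2 ∂μ₁ ≠ ⊤) →
    ∃ μ : ℝ → Measure X, μ 0 = μ₀ ∧ μ 1 = μ₁ ∧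
      (∀ t ∈ Icc (0:ℝ) 1, IsProbabilityMeasure (μ t)) ∧
      (∀ s ∈ Icc (0:ℝ) 1, ∀ t ∈ Icc (0:ℝ) 1,
        wassersteinDist (μ s) (μ t) = ENNReal.ofReal |s - t| * wassersteinDist μ₀ μ₁) ∧
      (∀ t ∈ Icc (0:ℝ) 1,
        relEntropy m (μ t) ≤ ((1 - t : ℝ) : EReal) * relEntropy m μ₀
          + ((t : ℝ) : EReal) * relEntropy m μ₁)

/-- Minkowski content via open ε-neighbourhoods. -/
noncomputable def minkowskiContent {X : Type*} [MeasurableSpace X] [PseudoEMetricSpace X]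
    (m : Measure X) (Z : Set X) : ENNReal :=
  liminf (fun ε : ℝ => (m (Metric.thickening ε Z) - m Z) / ENNReal.ofReal ε)
    (nhdsWithin 0 (Set.Ioi 0))

/-- The set of t-intermediate points between A and B. -/
def intermediatePoints {X : Type*} [PseudoMetricSpace X] (t : ℝ) (A B : Set X) : Set X :=
  {z | ∃ x ∈ A, ∃ y ∈ B, dist z x = t * dist x y ∧ dist z y = (1 - t) * dist x y}

/-!
Suppose `C * m(Ω) ≤ m⁺(Ω)` for every set of finite positive measure, and pick `h < b < c < C`.
Since the `ε`-neighbourhood of `B_r(x₀)` lies in `B_{r+ε}(x₀)`, the function `φ r = m(B_r(x₀))`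
satisfies `φ (r + ε) ≥ (1 + c ε) φ r ≥ e^{b ε} φ r` for small `ε > 0`. A real-induction argument,
which needs only the monotonicity of `φ`, turns this into `φ r ≥ φ r₀ e^{b (r - r₀)}`,
so the volume entropy is at least `b > h`.
-/

open scoped NNReal ENNReal Topology

theorem Monotone.ge_of_continuous_of_eventually_nhdsGT {α β : Type*}
    [ConditionallyCompleteLinearOrder α] [TopologicalSpace α] [OrderTopology α] [DenselyOrdered α]
    [LinearOrder β] [TopologicalSpace β] [OrderClosedTopology β]
    {φ B : α → β} (hφ : Monotone φ) (hB : Continuous B) {a : α} (ha : B a ≤ φ a)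
    (hstep : ∀ x ≥ a, B x ≤ φ x → ∀ᶠ y in 𝓝[>] x, B y ≤ φ y) :
    ∀ x ≥ a, B x ≤ φ x := by
  have of_Ico : ∀ x ≥ a, (∀ y ∈ Ico a x, B y ≤ φ y) → B x ≤ φ x := by
    intro x hax hIco
    rcases hax.eq_or_lt with rfl | hax
    · exact ha
    have := nhdsLT_neBot_of_exists_lt ⟨a, hax⟩
    refine _root_.le_of_tendsto (hB.tendsto x |>.mono_left (nhdsWithin_le_nhds (s := Iio x))) ?_
    filter_upwards [Ioo_mem_nhdsLT hax] with y hy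
    exact (hIco y (Ioo_subset_Ico_self hy)).trans (hφ hy.2.le)
  -- Unlike `{x | B x ≤ φ x}`, this set is closed whatever `B` and `φ` are.
  set s := {x | ∀ y ∈ Ico a x, B y ≤ φ y}
  have hs : IsClosed s := by
    have : s = ⋂ y ∈ {y | a ≤ y ∧ φ y < B y}, Iic y := by
      ext x
      simp only [s, mem_ofPred_eq, mem_Ico, mem_iInter, mem_Iic, and_imp]
      exact forall_congr' fun y => ⟨fun h hay hy => not_lt.1 fun hyx => (h hay hyx).not_gt hy,
        fun h hay hyx => not_lt.1 fun hy => (h hay hy).not_gt hyx⟩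
    rw [this]
    exact isClosed_biInter fun y _ => isClosed_Iic
  intro x hax
  have hsub : Icc a x ⊆ s := by
    refine (hs.inter isClosed_Icc).Icc_subset_of_forall_mem_nhdsWithin
      (fun y hy => absurd hy.2 (not_lt.2 hy.1)) fun z ⟨hzs, haz, hzx⟩ => ?_
    have hz := of_Ico z haz hzs
    obtain ⟨u, hzu, hu⟩ := (mem_nhdsGT_iff_exists_Ioo_subset' hzx).1 (hstep z haz hz)
    filter_upwards [Ioo_mem_nhdsGT hzu] with w hw y hy
    rcases lt_trichotomy y z with hyz | rfl | hzy
    · exact hzs y ⟨hy.1, hyz⟩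
    · exact hz
    · exact hu ⟨hzy, hy.2.trans hw.2⟩
  exact of_Ico x hax (hsub ⟨hax, le_rfl⟩)

theorem eventually_exp_mul_lt_one_add_mul {b c : ℝ} (hbc : b < c) :
    ∀ᶠ ε in 𝓝[>] 0, Real.exp (b * ε) < 1 + c * ε := by
  have hderiv : HasDerivAt (fun ε => Real.exp (b * ε)) b 0 := by
    simpa using ((hasDerivAt_id (0 : ℝ)).const_mul b).exp
  filter_upwards [hderiv.tendsto_slope_zero_right.eventually (gt_mem_nhds hbc),
    self_mem_nhdsWithin] with ε hε (hε0 : 0 < ε)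
  simp only [zero_add, mul_zero, Real.exp_zero, smul_eq_mul] at hε
  rw [inv_mul_lt_iff₀ hε0] at hε
  linarith

theorem eventually_measure_add_mul_lt_measure_thickening {X : Type*} [PseudoEMetricSpace X]
    [MeasurableSpace X] {m : Measure X} {Z : Set X} {c : ℝ≥0∞}
    (h : c * m Z < minkowskiContent m Z) :
    ∀ᶠ ε in 𝓝[>] 0, m Z + c * m Z * ENNReal.ofReal ε < m (thickening ε Z) := by
  filter_upwards [eventually_lt_of_lt_liminf h, self_mem_nhdsWithin] with ε hε (hε0 : 0 < ε)
  rwa [ENNReal.lt_div_iff_mul_lt (.inl (ENNReal.ofReal_pos.2 hε0).ne') (.inl ENNReal.ofReal_ne_top),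
    lt_tsub_iff_left] at hε

section Balls

variable {X : Type*} [PseudoMetricSpace X] [MeasurableSpace X] {m : Measure X} {x : X}
  {b : ℝ} {c : ℝ≥0}

theorem eventually_measure_ball_mul_exp_le {r : ℝ} (hbc : b < c) (hfin : ∀ s, m (ball x s) ≠ ⊤)
    (hiso : c * m (ball x r) < minkowskiContent m (ball x r)) :
    ∀ᶠ s in 𝓝[>] r, (m (ball x r)).toReal * Real.exp (b * (s - r)) ≤ (m (ball x s)).toReal := by
  have hmap : 𝓝[>] r = map (r + ·) (𝓝[>] 0) := by simp
  rw [hmap, eventually_map]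
  filter_upwards [eventually_measure_add_mul_lt_measure_thickening hiso,
    eventually_exp_mul_lt_one_add_mul hbc, self_mem_nhdsWithin] with ε hthick hexp (hε : 0 < ε)
  have hball : m (ball x r) + c * m (ball x r) * ENNReal.ofReal ε ≤ m (ball x (r + ε)) :=
    hthick.le.trans (measure_mono ((thickening_ball x ε r).trans_eq (by rw [add_comm])))
  have hreal := ENNReal.toReal_mono (hfin _) hball
  have hfin_r := hfin r
  rw [ENNReal.toReal_add (by finiteness) (by finiteness), ENNReal.toReal_mul, ENNReal.toReal_mul,
    ENNReal.toReal_ofReal hε.le, ENNReal.coe_toReal] at hreal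
  calc (m (ball x r)).toReal * Real.exp (b * (r + ε - r))
      ≤ (m (ball x r)).toReal * (1 + c * ε) := by
        rw [add_sub_cancel_left]; gcongr
    _ = (m (ball x r)).toReal + c * (m (ball x r)).toReal * ε := by ring
    _ ≤ (m (ball x (r + ε))).toReal := hreal

theorem measure_ball_mul_exp_le {r₀ : ℝ} (hbc : b < c) (hfin : ∀ r, m (ball x r) ≠ ⊤)
    (hiso : ∀ r ≥ r₀, c * m (ball x r) < minkowskiContent m (ball x r)) :
    ∀ r ≥ r₀, (m (ball x r₀)).toReal * Real.exp (b * (r - r₀)) ≤ (m (ball x r)).toReal := by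
  refine Monotone.ge_of_continuous_of_eventually_nhdsGT (φ := fun r => (m (ball x r)).toReal)
    (fun r s hrs => ENNReal.toReal_mono (hfin s) (measure_mono (ball_subset_ball hrs)))
    (by fun_prop) (by simp) fun r hr hle => ?_
  filter_upwards [eventually_measure_ball_mul_exp_le hbc hfin (hiso r hr)] with s hs
  calc (m (ball x r₀)).toReal * Real.exp (b * (s - r₀))
      = (m (ball x r₀)).toReal * Real.exp (b * (r - r₀)) * Real.exp (b * (s - r)) := by
        rw [mul_assoc, ← Real.exp_add]; ring_nf
    _ ≤ (m (ball x r)).toReal * Real.exp (b * (s - r)) := by gcongr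
    _ ≤ (m (ball x s)).toReal := hs

end Balls

theorem eventually_ne_zero_ne_top_of_tendsto_log_toReal_div {φ : ℝ → ℝ≥0∞} {L : ℝ} (hL : L ≠ 0)
    (hlim : Tendsto (fun r => Real.log (φ r).toReal / r) atTop (𝓝 L)) :
    ∀ᶠ r in atTop, φ r ≠ 0 ∧ φ r ≠ ⊤ := by
  filter_upwards [hlim.eventually_ne hL] with r hr
  rw [← not_or, ← ENNReal.toReal_eq_zero_iff]
  intro h0
  simp [h0] at hr

theorem le_of_tendsto_log_div_of_mul_exp_le {f : ℝ → ℝ} {K r₀ b L : ℝ} (hK : 0 < K)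
    (hf : ∀ r ≥ r₀, K * Real.exp (b * (r - r₀)) ≤ f r)
    (hlim : Tendsto (fun r => Real.log (f r) / r) atTop (𝓝 L)) : b ≤ L := by
  have hlow : Tendsto (fun r => (Real.log K + b * (r - r₀)) / r) atTop (𝓝 b) := by
    have : Tendsto (fun r => b + (Real.log K - b * r₀) * r⁻¹) atTop (𝓝 b) := by
      simpa using tendsto_const_nhds.add (tendsto_inv_atTop_zero.const_mul (Real.log K - b * r₀))
    refine this.congr' ?_
    filter_upwards [eventually_ne_atTop 0] with r hr
    field_simp
    ring
  refine le_of_tendsto_of_tendsto hlow hlim ?_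
  filter_upwards [eventually_ge_atTop r₀, eventually_gt_atTop 0] with r hr hr0
  gcongr
  calc Real.log K + b * (r - r₀) = Real.log (K * Real.exp (b * (r - r₀))) := by
        rw [Real.log_mul hK.ne' (Real.exp_ne_zero _), Real.log_exp]
    _ ≤ Real.log (f r) := Real.log_le_log (by positivity) (hf r hr)

theorem isoperimetric_constant_sharp_general
    {X : Type*} [MetricSpace X] [MeasurableSpace X] [BorelSpace X] [Nonempty X]
    (m : Measure X) (h : ENNReal) (hpos : 0 < h)
    (hent : ∀ x₀ : X, Tendsto
      (fun r : ℝ => ((Real.log (m (ball x₀ r)).toReal / r : ℝ) : EReal)) atTop (nhds (h : EReal)))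
    (C : ENNReal) (hC : h < C) :
    ∃ Ω : Set X, MeasurableSet Ω ∧ 0 < m Ω ∧ m Ω ≠ ⊤ ∧
      minkowskiContent m Ω < C * m Ω := by
  by_contra! hcon
  obtain ⟨x₀⟩ := ‹Nonempty X›
  have hh : h ≠ ⊤ := hC.ne_top
  have hlim : Tendsto (fun r => Real.log (m (ball x₀ r)).toReal / r) atTop (𝓝 h.toReal) := by
    rw [← EReal.tendsto_coe, EReal.coe_ennreal_toReal hh]
    exact hent x₀
  obtain ⟨R, hR⟩ := eventually_atTop.1 <| eventually_ne_zero_ne_top_of_tendsto_log_toReal_div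
    (ENNReal.toReal_pos hpos.ne' hh).ne' hlim
  have hfin : ∀ r, m (ball x₀ r) ≠ ⊤ := fun r => ne_top_of_le_ne_top
    (hR _ (le_max_right r R)).2 (measure_mono (ball_subset_ball (le_max_left r R)))
  obtain ⟨c, hhc, hcC⟩ := ENNReal.lt_iff_exists_nnreal_btwn.1 hC
  obtain ⟨b, hhb, hbc⟩ := exists_between ((ENNReal.toReal_lt_toReal hh ENNReal.coe_ne_top).2 hhc)
  have hiso : ∀ r ≥ R, (c : ℝ≥0∞) * m (ball x₀ r) < minkowskiContent m (ball x₀ r) := fun r hr =>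
    (ENNReal.mul_lt_mul_left (hR r hr).1 (hfin r) hcC).trans_le
      (hcon _ measurableSet_ball (pos_iff_ne_zero.2 (hR r hr).1) (hfin r))
  exact hhb.not_ge <| le_of_tendsto_log_div_of_mul_exp_le
    (ENNReal.toReal_pos (hR R le_rfl).1 (hfin R)) (measure_ball_mul_exp_le hbc hfin hiso) hlim

/-- sharpness of the isoperimetric constant: for any `C > h` there is a
set violating the isoperimetric inequality with constant `C`. -/
theorem isoperimetric_constant_sharp
    {X : Type*} [MetricSpace X] [MeasurableSpace X] [BorelSpace X] [Nonempty X]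
    (m : Measure X) (hCD : IsCD0Infty m) (h : ENNReal) (hpos : 0 < h)
    (hent : ∀ x₀ : X, Tendsto
      (fun r : ℝ => ((Real.log (m (ball x₀ r)).toReal / r : ℝ) : EReal)) atTop (nhds (h : EReal)))
    (C : ENNReal) (hC : h < C) :
    ∃ Ω : Set X, MeasurableSet Ω ∧ 0 < m Ω ∧ m Ω ≠ ⊤ ∧
      minkowskiContent m Ω < C * m Ω :=
  isoperimetric_constant_sharp_general m h hpos hent C hC
end

section
/- Let (X,d,m) be a metric measure space satisfying CD(0,∞) whose volume entropy vanishes, h(X,d,m) = 0. Then there is no constant C > 0 such that m⁺(Ω) ≥ C·m(Ω) holds for all Borel sets Ω ⊆ X with 0 < m(Ω) < ∞. -/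
/-!
A linear isoperimetric inequality applied to balls `B_r(x₀)` says that the right lower
Dini derivative of `v r = m(B_r(x₀))` is at least `C v r`, because the `ε`-thickening of
`B_r` lies in `B_{r+ε}`. A monotone function with this property grows at least like
`exp (c r)` for every `c < C`, so `log v r / r` cannot tend to `0`.
-/

open MeasureTheory Metric Filter Set

open Real
open scoped ENNReal Topology

section Minkowski

variable {X : Type*} [PseudoMetricSpace X] [MeasurableSpace X] {m : Measure X}

theorem eventually_add_mul_le_measure_thickening {Z : Set X} {C : ℝ≥0∞}
    (h : C * m Z < minkowskiContent m Z) :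
    ∀ᶠ ε in 𝓝[>] 0, m Z + C * m Z * ENNReal.ofReal ε ≤ m (thickening ε Z) := by
  filter_upwards [eventually_lt_of_lt_liminf h, self_mem_nhdsWithin] with ε hε hε0
  rw [add_comm]
  refine add_le_of_le_tsub_right_of_le (measure_mono (self_subset_thickening hε0 Z)) ?_
  exact (ENNReal.le_div_iff_mul_le (.inl (ENNReal.ofReal_pos.2 hε0).ne')
    (.inl ENNReal.ofReal_ne_top)).1 hε.le

theorem eventually_toReal_measure_ball_mul_le {x : X} {r C : ℝ} (hC : 0 ≤ C)
    (hfin : ∀ t, r ≤ t → m (ball x t) ≠ ∞)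
    (h : ENNReal.ofReal C * m (ball x r) < minkowskiContent m (ball x r)) :
    ∀ᶠ ε in 𝓝[>] 0,
      (m (ball x r)).toReal * (1 + C * ε) ≤ (m (ball x (r + ε))).toReal := by
  filter_upwards [eventually_add_mul_le_measure_thickening h, self_mem_nhdsWithin]
    with ε hε hε0
  have hball : thickening ε (ball x r) ⊆ ball x (r + ε) :=
    add_comm ε r ▸ thickening_ball x ε r
  have hle := ENNReal.toReal_mono (hfin _ (by linarith [hε0.out]))
    (hε.trans (measure_mono hball))
  have hr := hfin r le_rfl
  rw [ENNReal.toReal_add hr (by finiteness), ENNReal.toReal_mul,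
    ENNReal.toReal_mul, ENNReal.toReal_ofReal hC, ENNReal.toReal_ofReal hε0.out.le] at hle
  linarith

end Minkowski

theorem le_of_monotoneOn_of_forall_eventually_le {v g : ℝ → ℝ} {a b : ℝ} (hab : a ≤ b)
    (hv : MonotoneOn v (Icc a b)) (hg : ContinuousOn g (Icc a b)) (ha : g a ≤ v a)
    (hstep : ∀ s ∈ Ico a b, g s ≤ v s → ∀ᶠ ε in 𝓝[>] 0, g (s + ε) ≤ v (s + ε)) :
    g b ≤ v b := by
  set T := {s ∈ Icc a b | g s ≤ v s}
  have haT : a ∈ T := ⟨left_mem_Icc.2 hab, ha⟩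
  have hT : BddAbove T := ⟨b, fun s hs => hs.1.2⟩
  set s₀ := sSup T
  have hs₀ : s₀ ∈ Icc a b := ⟨le_csSup hT haT, csSup_le ⟨a, haT⟩ fun s hs => hs.1.2⟩
  -- `v` need not be continuous, but on `T` we have `g s ≤ v s ≤ v s₀`, a closed condition on `s`.
  have hs₀T : s₀ ∈ T := by
    have hK : IsClosed (Icc a b ∩ g ⁻¹' Iic (v s₀)) :=
      hg.preimage_isClosed_of_isClosed isClosed_Icc isClosed_Iic
    have hTK : T ⊆ Icc a b ∩ g ⁻¹' Iic (v s₀) := fun s hs =>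
      ⟨hs.1, hs.2.trans (hv hs.1 hs₀ (le_csSup hT hs))⟩
    exact ⟨hs₀, (hK.closure_subset_iff.2 hTK (csSup_mem_closure ⟨a, haT⟩ hT)).2⟩
  obtain hb | hlt := hs₀.2.eq_or_lt
  · exact hb ▸ hs₀T.2
  obtain ⟨ε, hε, hεb⟩ :=
    ((hstep s₀ ⟨hs₀.1, hlt⟩ hs₀T.2).and (Ioo_mem_nhdsGT (sub_pos.2 hlt))).exists
  have hεT : s₀ + ε ∈ T := ⟨⟨by linarith [hs₀.1, hεb.1], by linarith [hεb.2]⟩, hε⟩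
  linarith [le_csSup hT hεT, hεb.1]

theorem eventually_exp_mul_le_one_add_mul {c C : ℝ} (h : c < C) :
    ∀ᶠ ε in 𝓝[>] 0, exp (c * ε) ≤ 1 + C * ε := by
  have hslope : Tendsto (fun ε => ε⁻¹ * (exp (c * ε) - 1)) (𝓝[>] 0) (𝓝 c) := by
    simpa using ((hasDerivAt_id (0 : ℝ)).const_mul c).exp.tendsto_slope_zero_right
  filter_upwards [hslope.eventually (eventually_lt_nhds h), self_mem_nhdsWithin] with ε hε hε0
  rw [inv_mul_lt_iff₀ hε0] at hε
  linarith

theorem mul_exp_le_of_monotoneOn_of_eventually_mul_one_add_le {v : ℝ → ℝ} {a c C : ℝ}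
    (hv : MonotoneOn v (Ici a)) (ha : 0 ≤ v a) (hc : c < C)
    (hgrowth : ∀ s, a ≤ s → ∀ᶠ ε in 𝓝[>] 0, v s * (1 + C * ε) ≤ v (s + ε))
    {t : ℝ} (ht : a ≤ t) :
    v a * exp (c * (t - a)) ≤ v t := by
  refine le_of_monotoneOn_of_forall_eventually_le (g := fun t => v a * exp (c * (t - a))) ht
    (hv.mono Icc_subset_Ici_self) (by fun_prop) (by simp) fun s hs hgs => ?_
  filter_upwards [hgrowth s hs.1, eventually_exp_mul_le_one_add_mul hc] with ε hε hexp
  calc v a * exp (c * (s + ε - a)) = v a * exp (c * (s - a)) * exp (c * ε) := by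
        rw [mul_assoc, ← exp_add]; ring_nf
    _ ≤ v s * (1 + C * ε) :=
        mul_le_mul hgs hexp (exp_pos _).le (ha.trans (hv self_mem_Ici hs.1 hs.1))
    _ ≤ v (s + ε) := hε

theorem le_of_tendsto_log_div_of_mul_exp_le_s6 {v : ℝ → ℝ} {A a c L : ℝ} (hA : 0 < A)
    (hv : ∀ᶠ r in atTop, A * exp (c * (r - a)) ≤ v r)
    (hL : Tendsto (fun r => log (v r) / r) atTop (𝓝 L)) : c ≤ L := by
  have hlow : Tendsto (fun r => (log A - c * a) / r + c) atTop (𝓝 c) := by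
    simpa using (tendsto_const_nhds.div_atTop tendsto_id).add_const c
  refine le_of_tendsto_of_tendsto hlow hL ?_
  filter_upwards [hv, eventually_gt_atTop 0] with r hr hr0
  have hlog := log_le_log (by positivity) hr
  rw [log_mul hA.ne' (exp_pos _).ne', log_exp] at hlog
  rw [div_add' _ _ _ hr0.ne', div_le_div_iff_of_pos_right hr0]
  linarith

theorem no_linear_isoperimetry_of_zero_entropy_general
    {X : Type*} [MetricSpace X] [MeasurableSpace X] [BorelSpace X] [Nonempty X]
    (m : Measure X)
    (hball : ∀ (x : X) (r : ℝ), 0 < r → 0 < m (ball x r) ∧ m (ball x r) ≠ ⊤)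
    (hent : ∀ x₀ : X, Tendsto
      (fun r : ℝ => ((Real.log (m (ball x₀ r)).toReal / r : ℝ) : EReal)) atTop
      (nhds (0 : EReal))) :
    ¬ ∃ C : ℝ, 0 < C ∧ ∀ Ω : Set X, MeasurableSet Ω → 0 < m Ω → m Ω ≠ ⊤ →
        ENNReal.ofReal C * m Ω ≤ minkowskiContent m Ω := by
  rintro ⟨C, hC, hiso⟩
  obtain ⟨x₀⟩ := ‹Nonempty X›
  set v : ℝ → ℝ := fun r => (m (ball x₀ r)).toReal
  have hv : MonotoneOn v (Ici 1) := fun s hs t _ hst =>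
    ENNReal.toReal_mono (hball x₀ t (by linarith [hs.out])).2
      (measure_mono (ball_subset_ball hst))
  have hgrowth : ∀ s, 1 ≤ s → ∀ᶠ ε in 𝓝[>] 0, v s * (1 + C / 2 * ε) ≤ v (s + ε) := by
    intro s hs
    obtain ⟨hpos, hfin⟩ := hball x₀ s (by linarith)
    refine eventually_toReal_measure_ball_mul_le (by positivity)
      (fun t ht => (hball x₀ t (by linarith)).2) ?_
    calc ENNReal.ofReal (C / 2) * m (ball x₀ s) < ENNReal.ofReal C * m (ball x₀ s) :=
          ENNReal.mul_lt_mul_left hpos.ne' hfin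
            ((ENNReal.ofReal_lt_ofReal_iff hC).2 (by linarith))
      _ ≤ minkowskiContent m (ball x₀ s) := hiso _ measurableSet_ball hpos hfin
  have hv1 : 0 < v 1 := ENNReal.toReal_pos (hball x₀ 1 one_pos).1.ne' (hball x₀ 1 one_pos).2
  have hexp : ∀ᶠ r in atTop, v 1 * exp (C / 4 * (r - 1)) ≤ v r :=
    eventually_atTop.2 ⟨1, fun r hr => mul_exp_le_of_monotoneOn_of_eventually_mul_one_add_le
      hv hv1.le (by linarith) hgrowth hr⟩
  have hC4 : C / 4 ≤ 0 :=
    le_of_tendsto_log_div_of_mul_exp_le_s6 hv1 hexp (EReal.tendsto_coe.1 (hent x₀))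
  linarith

/-- if the volume entropy vanishes, no linear isoperimetric inequality
`m⁺(Ω) ≥ C m(Ω)` with `C > 0` can hold for all Borel sets of finite positive measure. -/
theorem no_linear_isoperimetry_of_zero_entropy
    {X : Type*} [MetricSpace X] [MeasurableSpace X] [BorelSpace X] [Nonempty X]
    (m : Measure X) (hCD : IsCD0Infty m)
    (hball : ∀ (x : X) (r : ℝ), 0 < r → 0 < m (ball x r) ∧ m (ball x r) ≠ ⊤)
    (hent : ∀ x₀ : X, Tendsto
      (fun r : ℝ => ((Real.log (m (ball x₀ r)).toReal / r : ℝ) : EReal)) atTop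
      (nhds (0 : EReal))) :
    ¬ ∃ C : ℝ, 0 < C ∧ ∀ Ω : Set X, MeasurableSet Ω → 0 < m Ω → m Ω ≠ ⊤ →
        ENNReal.ofReal C * m Ω ≤ minkowskiContent m Ω :=
  no_linear_isoperimetry_of_zero_entropy_general m hball hent
end

section
/- Let f : (0,∞) → (0,∞) be nondecreasing and suppose there exists C > 0 such that for all 0 < ε < r and δ > 0: ln f(r) ≥ (δ+ε)/(r+δ) · ln f(ε) + (r−ε)/(r+δ) · ln f(r+δ), and suppose additionally (ln f(r+δ) − ln f(r))/δ ≥ C for all r, δ > 0. Then lim_{r→∞} (ln f(r))/r exists and C ≤ lim_{r→∞} (ln f(r))/r. -/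
/-!
Put `G = log ∘ f`. The interpolation inequality with `ε = 1` says that the chord slopes
`σ s = slope G 1 s` satisfy `σ s ≤ s / (s - 1) * σ r` for `1 < r < s`; hence `limsup σ ≤ σ r` for
every `r > 1`, so `σ` converges to its infimum over `(1, ∞)`, which the growth bound makes at
least `C`. Finally `G r / r` and `σ r` have the same limit.
-/

open MeasureTheory Metric Filter Set

open Topology

theorem tendsto_csInf_image_Ioi {α β : Type*} [Preorder α] [NoMaxOrder α]
    [ConditionallyCompleteLinearOrder β] [TopologicalSpace β] [OrderTopology β]
    {ψ : α → β} {a : α} (hbdd : BddBelow (ψ '' Ioi a))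
    (hlt : ∀ r > a, ∀ b > ψ r, ∀ᶠ s in atTop, ψ s < b) :
    Tendsto ψ atTop (𝓝 (sInf (ψ '' Ioi a))) := by
  refine tendsto_order.2 ⟨fun b hb => ?_, fun b hb => ?_⟩
  · filter_upwards [Ioi_mem_atTop a] with s hs
    exact hb.trans_le (csInf_le hbdd (mem_image_of_mem ψ hs))
  · obtain ⟨_, ⟨r, hr, rfl⟩, hrb⟩ := exists_lt_of_csInf_lt (nonempty_Ioi.image ψ) hb
    exact hlt r hr b hrb

theorem tendsto_self_div_sub_const_atTop (ε : ℝ) :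
    Tendsto (fun s : ℝ => s / (s - ε)) atTop (𝓝 1) := by
  have h : Tendsto (fun s : ℝ => (1 - ε * s⁻¹)⁻¹) atTop (𝓝 (1 - ε * 0)⁻¹) :=
    ((tendsto_const_nhds.sub (tendsto_inv_atTop_zero.const_mul ε)).inv₀ (by simp))
  rw [mul_zero, sub_zero, inv_one] at h
  refine h.congr' ?_
  filter_upwards [eventually_gt_atTop 0] with s hs
  field_simp

theorem tendsto_div_self_of_tendsto_slope {f : ℝ → ℝ} {a m : ℝ}
    (h : Tendsto (slope f a) atTop (𝓝 m)) : Tendsto (fun r => f r / r) atTop (𝓝 m) := by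
  have hlim : Tendsto (fun r => (1 - a * r⁻¹) * slope f a r + f a * r⁻¹) atTop
      (𝓝 ((1 - a * 0) * m + f a * 0)) :=
    ((tendsto_const_nhds.sub (tendsto_inv_atTop_zero.const_mul a)).mul h).add
      (tendsto_inv_atTop_zero.const_mul (f a))
  rw [mul_zero, sub_zero, one_mul, mul_zero, add_zero] at hlim
  refine hlim.congr' ?_
  filter_upwards [eventually_gt_atTop 0, eventually_ne_atTop a] with r hr hra
  rw [slope_def_field]
  field_simp [sub_ne_zero.2 hra]
  ring

theorem slope_le_mul_slope_of_chord {G : ℝ → ℝ} {ε r s : ℝ} (hε : 0 < ε) (hεr : ε < r)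
    (hrs : r < s) (h : (s - r + ε) / s * G ε + (r - ε) / s * G s ≤ G r) :
    slope G ε s ≤ s / (s - ε) * slope G ε r := by
  have hs : 0 < s := by linarith
  have hsε : 0 < s - ε := by linarith
  have hchord : (r - ε) * (G s - G ε) ≤ s * (G r - G ε) := by
    have hmul := mul_le_mul_of_nonneg_left h hs.le
    rw [mul_add, ← mul_assoc, ← mul_assoc, mul_div_cancel₀ _ hs.ne',
      mul_div_cancel₀ _ hs.ne'] at hmul
    linear_combination hmul
  have hrhs : s / (s - ε) * slope G ε r * (s - ε) = s * (G r - G ε) / (r - ε) := by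
    rw [slope_def_field]
    field_simp
  rw [slope_def_field, div_le_iff₀ hsε, hrhs, le_div_iff₀ (by linarith)]
  linarith

theorem sharpness_real_core_general (f : ℝ → ℝ) (C : ℝ)
    (hconc : ∀ ε r δ : ℝ, 0 < ε → ε < r → 0 < δ →
      (δ + ε) / (r + δ) * Real.log (f ε) + (r - ε) / (r + δ) * Real.log (f (r + δ))
        ≤ Real.log (f r))
    (hgrow : ∀ r δ : ℝ, 0 < r → 0 < δ → C ≤ (Real.log (f (r + δ)) - Real.log (f r)) / δ) :
    ∃ L : EReal, Tendsto (fun r : ℝ => ((Real.log (f r) / r : ℝ) : EReal)) atTop (nhds L) ∧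
      (C : EReal) ≤ L := by
  let G : ℝ → ℝ := fun r => Real.log (f r)
  have hC : ∀ s ∈ Ioi (1 : ℝ), C ≤ slope G 1 s := fun s hs => by
    simpa [slope_def_field, G] using hgrow 1 (s - 1) one_pos (sub_pos.2 hs)
  have hchord : ∀ r > (1 : ℝ), ∀ s > r, slope G 1 s ≤ s / (s - 1) * slope G 1 r :=
    fun r hr s hrs => slope_le_mul_slope_of_chord one_pos hr hrs <| by
      simpa using hconc 1 r (s - r) one_pos hr (sub_pos.2 hrs)
  have hlt : ∀ r > (1 : ℝ), ∀ b > slope G 1 r, ∀ᶠ s in atTop, slope G 1 s < b := by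
    intro r hr b hb
    have hlim := (tendsto_self_div_sub_const_atTop 1).mul_const (slope G 1 r)
    rw [one_mul] at hlim
    filter_upwards [hlim.eventually (gt_mem_nhds hb), eventually_gt_atTop r] with s hsb hrs
    exact (hchord r hr s hrs).trans_lt hsb
  have hbdd : BddBelow (slope G 1 '' Ioi 1) := ⟨C, forall_mem_image.2 hC⟩
  exact ⟨_, EReal.tendsto_coe.2
      (tendsto_div_self_of_tendsto_slope (tendsto_csInf_image_Ioi hbdd hlt)),
    EReal.coe_le_coe (le_csInf (nonempty_Ioi.image _) (forall_mem_image.2 hC))⟩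

/-- real-analysis core of the sharpness argument. -/
theorem sharpness_real_core (f : ℝ → ℝ) (C : ℝ) (hC : 0 < C)
    (hpos : ∀ r : ℝ, 0 < r → 0 < f r)
    (hmono : ∀ r s : ℝ, 0 < r → r ≤ s → f r ≤ f s)
    (hconc : ∀ ε r δ : ℝ, 0 < ε → ε < r → 0 < δ →
      (δ + ε) / (r + δ) * Real.log (f ε) + (r - ε) / (r + δ) * Real.log (f (r + δ))
        ≤ Real.log (f r))
    (hgrow : ∀ r δ : ℝ, 0 < r → 0 < δ → C ≤ (Real.log (f (r + δ)) - Real.log (f r)) / δ) :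
    ∃ L : EReal, Tendsto (fun r : ℝ => ((Real.log (f r) / r : ℝ) : EReal)) atTop (nhds L) ∧
      (C : EReal) ≤ L :=
  sharpness_real_core_general f C hconc hgrow
end

section
/- Let (X,d,m) be a metric measure space satisfying CD(0,∞) in which some (equivalently every) ball has finite measure, and suppose that for some C > 0 the isoperimetric inequality m⁺(Ω) ≥ C·m(Ω) holds for all Borel sets Ω with 0 < m(Ω) < ∞. Then for every x₀ ∈ X, every r > 0 and δ > 0: ln m(B_{r+δ}(x₀)) − ln m(B_r(x₀)) ≥ C·δ. -/
open MeasureTheory Metric Filter Set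

/-! Since `thickening ε (ball x ρ) ⊆ ball x (ρ + ε)`, the isoperimetric inequality bounds the lower
right Dini derivative of `ρ ↦ log m(B_ρ(x₀))` from below by `C`. A monotone function whose lower
right Dini derivative is at least `C` on `[a, b)` grows by at least `C (b - a)`: monotonicity
replaces the continuity that the usual mean value argument needs. -/

open Topology ENNReal

theorem MonotoneOn.mul_sub_le_sub_of_exists {f : ℝ → ℝ} {a b c : ℝ}
    (hf : MonotoneOn f (Icc a b)) (hab : a ≤ b)
    (h : ∀ x ∈ Ico a b, ∃ z ∈ Ioc x b, c * (z - x) ≤ f z - f x) :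
    c * (b - a) ≤ f b - f a := by
  set S := {x ∈ Icc a b | c * (x - a) ≤ f x - f a}
  have haS : a ∈ S := ⟨left_mem_Icc.2 hab, by simp⟩
  have hbdd : BddAbove S := ⟨b, fun x hx => hx.1.2⟩
  have hs : sSup S ∈ Icc a b := ⟨le_csSup hbdd haS, csSup_le ⟨a, haS⟩ fun x hx => hx.1.2⟩
  -- `S` need not be closed, but monotonicity of `f` lets the bound pass to `sSup S`.
  have hsS : sSup S ∈ S := by
    refine ⟨hs, ?_⟩
    have hclosure : closure S ⊆ {y | c * (y - a) ≤ f (sSup S) - f a} :=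
      closure_minimal
        (fun y hy => hy.2.trans (sub_le_sub_right (hf hy.1 hs (le_csSup hbdd hy)) _))
        (isClosed_le (by fun_prop) continuous_const)
    exact hclosure (csSup_mem_closure ⟨a, haS⟩ hbdd)
  rcases hs.2.eq_or_lt with hsb | hsb
  · exact hsb ▸ hsS.2
  obtain ⟨z, hz, hcz⟩ := h (sSup S) ⟨hs.1, hsb⟩
  have hzS : z ∈ S := ⟨⟨hs.1.trans hz.1.le, hz.2⟩, by linarith [hsS.2]⟩
  exact absurd (le_csSup hbdd hzS) (not_le.2 hz.1)

theorem MonotoneOn.mul_sub_le_sub_of_eventually {f : ℝ → ℝ} {a b c : ℝ}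
    (hf : MonotoneOn f (Icc a b)) (hab : a ≤ b)
    (h : ∀ x ∈ Ico a b, ∀ c' < c, ∀ᶠ ε in 𝓝[>] 0, c' * ε ≤ f (x + ε) - f x) :
    c * (b - a) ≤ f b - f a := by
  rcases hab.eq_or_lt with rfl | hab
  · simp
  rw [← le_div_iff₀ (sub_pos.2 hab)]
  refine le_of_forall_lt_imp_le_of_dense fun c' hc' => ?_
  rw [le_div_iff₀ (sub_pos.2 hab)]
  refine hf.mul_sub_le_sub_of_exists hab.le fun x hx => ?_
  obtain ⟨ε, hε, hεx⟩ := ((h x hx c' hc').and (Ioc_mem_nhdsGT (sub_pos.2 hx.2))).exists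
  exact ⟨x + ε, ⟨by linarith [hεx.1], by linarith [hεx.2]⟩, by rwa [add_sub_cancel_left]⟩

theorem eventually_mul_lt_log_one_add {c k : ℝ} (hck : c < k) :
    ∀ᶠ ε in 𝓝[>] 0, c * ε < Real.log (1 + k * ε) := by
  have hderiv : HasDerivWithinAt (fun ε => Real.log (1 + k * ε)) k (Ioi 0) 0 := by
    have := (((hasDerivAt_id (0 : ℝ)).const_mul k).const_add 1).log (by simp)
    simpa using this.hasDerivWithinAt
  filter_upwards [(hasDerivWithinAt_iff_tendsto_slope' (lt_irrefl 0)).1 hderiv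
    |>.eventually (lt_mem_nhds hck), self_mem_nhdsWithin] with ε hslope hε
  rw [slope_def_field, sub_zero, mul_zero, add_zero, Real.log_one, sub_zero,
    lt_div_iff₀ hε] at hslope
  exact hslope

theorem minkowskiContent_ball_le {X : Type*} [PseudoMetricSpace X] [MeasurableSpace X]
    (m : Measure X) (x : X) (ρ : ℝ) :
    minkowskiContent m (ball x ρ) ≤
      liminf (fun ε => (m (ball x (ρ + ε)) - m (ball x ρ)) / ENNReal.ofReal ε) (𝓝[>] 0) :=
  liminf_le_liminf <| Eventually.of_forall fun ε => by
    gcongr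
    exact (thickening_ball x ε ρ).trans_eq (by rw [add_comm])

theorem eventually_mul_le_log_sub_log_of_le_liminf {V : ℝ → ℝ≥0∞} {x c C : ℝ}
    (hx : V x ≠ 0) (hV : ∀ y, V y ≠ ∞) (hC : 0 < C) (hc : c < C)
    (hgrowth : ENNReal.ofReal C * V x ≤
      liminf (fun ε => (V (x + ε) - V x) / ENNReal.ofReal ε) (𝓝[>] 0)) :
    ∀ᶠ ε in 𝓝[>] 0, c * ε ≤ Real.log (V (x + ε)).toReal - Real.log (V x).toReal := by
  obtain ⟨k, hk, hkC⟩ := exists_between (max_lt hc hC)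
  have hck : c < k := (le_max_left _ _).trans_lt hk
  have hk0 : 0 < k := (le_max_right _ _).trans_lt hk
  have hlt : ENNReal.ofReal k * V x < ENNReal.ofReal C * V x :=
    ENNReal.mul_lt_mul_left hx (hV x) ((ENNReal.ofReal_lt_ofReal_iff hC).2 hkC)
  filter_upwards [eventually_lt_of_lt_liminf (hlt.trans_le hgrowth),
    eventually_mul_lt_log_one_add hck, self_mem_nhdsWithin] with ε hε hlog (hε0 : 0 < ε)
  rw [ENNReal.lt_div_iff_mul_lt (.inl (ENNReal.ofReal_pos.2 hε0).ne') (.inl ofReal_ne_top),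
    lt_tsub_iff_left] at hε
  have hreal := ENNReal.toReal_strict_mono (hV _) hε
  rw [ENNReal.toReal_add (hV x) (mul_ne_top (mul_ne_top ofReal_ne_top (hV x))
    ofReal_ne_top), ENNReal.toReal_mul, ENNReal.toReal_mul, ENNReal.toReal_ofReal hk0.le,
    ENNReal.toReal_ofReal hε0.le] at hreal
  have hv : 0 < (V x).toReal := ENNReal.toReal_pos hx (hV x)
  have hgrowth_ε : (V x).toReal * (1 + k * ε) ≤ (V (x + ε)).toReal := by linarith
  have h1kε : 0 < 1 + k * ε := by positivity
  have := Real.log_le_log (by positivity) hgrowth_ε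
  rw [Real.log_mul hv.ne' h1kε.ne'] at this
  linarith

theorem linear_isoperimetry_exponential_growth_general
    {X : Type*} [MetricSpace X] [MeasurableSpace X] [BorelSpace X]
    (m : Measure X)
    (hball : ∀ (x : X) (r : ℝ), 0 < r → 0 < m (ball x r) ∧ m (ball x r) ≠ ⊤)
    (C : ℝ) (hC : 0 < C)
    (hiso : ∀ Ω : Set X, MeasurableSet Ω → 0 < m Ω → m Ω ≠ ⊤ →
      ENNReal.ofReal C * m Ω ≤ minkowskiContent m Ω)
    (x₀ : X) (r δ : ℝ) (hr : 0 < r) (hδ : 0 < δ) :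
    C * δ ≤ Real.log (m (ball x₀ (r + δ))).toReal - Real.log (m (ball x₀ r)).toReal := by
  have hfin : ∀ ρ, m (ball x₀ ρ) ≠ ⊤ := fun ρ => by
    rcases le_or_gt ρ 0 with hρ | hρ
    · simp [ball_eq_empty.2 hρ]
    · exact (hball x₀ ρ hρ).2
  have hlog_mono : MonotoneOn (fun ρ => Real.log (m (ball x₀ ρ)).toReal) (Icc r (r + δ)) :=
    fun ρ hρ σ _ hρσ => Real.log_le_log
      (ENNReal.toReal_pos (hball x₀ ρ (hr.trans_le hρ.1)).1.ne' (hfin ρ))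
      (ENNReal.toReal_mono (hfin σ) (measure_mono (ball_subset_ball hρσ)))
  have hgrowth := hlog_mono.mul_sub_le_sub_of_eventually (by linarith) fun ρ hρ c hc =>
    have hpos := (hball x₀ ρ (hr.trans_le hρ.1)).1
    eventually_mul_le_log_sub_log_of_le_liminf hpos.ne' hfin hC hc
      ((hiso _ measurableSet_ball hpos (hfin ρ)).trans (minkowskiContent_ball_le m x₀ ρ))
  rwa [add_sub_cancel_left] at hgrowth

/-- a linear isoperimetric inequality with constant `C` forces exponential
volume growth of balls at rate at least `C`. -/
theorem linear_isoperimetry_exponential_growth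
    {X : Type*} [MetricSpace X] [MeasurableSpace X] [BorelSpace X]
    (m : Measure X) (hCD : IsCD0Infty m)
    (hball : ∀ (x : X) (r : ℝ), 0 < r → 0 < m (ball x r) ∧ m (ball x r) ≠ ⊤)
    (C : ℝ) (hC : 0 < C)
    (hiso : ∀ Ω : Set X, MeasurableSet Ω → 0 < m Ω → m Ω ≠ ⊤ →
      ENNReal.ofReal C * m Ω ≤ minkowskiContent m Ω)
    (x₀ : X) (r δ : ℝ) (hr : 0 < r) (hδ : 0 < δ) :
    C * δ ≤ Real.log (m (ball x₀ (r + δ))).toReal - Real.log (m (ball x₀ r)).toReal :=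
  linear_isoperimetry_exponential_growth_general m hball C hC hiso x₀ r δ hr hδ
end
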